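/- arXiv:1807.05438 — 2 statements merged into one kernel-verified Lean document; each statement's English description precedes it below -/
import Mathlib

section
/- For any measurable function z : ℝ → ℝ with z and its derivative z' square-integrable on (-∞, x], one has |z(x)| ≤ √2 · ‖z‖_{L²((-∞,x])}^{1/2} · ‖z'‖_{L²((-∞,x])}^{1/2}. -/
open MeasureTheory Set

/-!
Since `z²` and its derivative `2 z z'` are integrable on `(-∞, x]`, `z²` tends to `0` at `-∞`,
so the fundamental theorem of calculus gives `z(x)² = 2 ∫_{-∞}^x z z'`. The Cauchy–Schwarz
inequality bounds this by `2 ‖z‖₂ ‖z'‖₂`, and taking square roots gives the claim.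
-/

theorem integral_mul_le_sqrt_integral_sq_mul_sqrt_integral_sq {α : Type*} [MeasurableSpace α]
    {μ : Measure α} {f g : α → ℝ} (hf : MemLp f 2 μ) (hg : MemLp g 2 μ) :
    ∫ a, f a * g a ∂μ ≤ √(∫ a, f a ^ 2 ∂μ) * √(∫ a, g a ^ 2 ∂μ) := by
  have hholder := integral_mul_norm_le_Lp_mul_Lq Real.HolderConjugate.two_two
    (by simpa using hf) (by simpa using hg)
  simp only [Real.norm_eq_abs, Real.rpow_two, sq_abs, ← Real.sqrt_eq_rpow] at hholder
  refine le_trans (integral_mono (hf.integrable_mul hg) ?_ fun a => ?_) hholder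
  · exact (hf.integrable_mul hg).abs.congr (.of_forall fun a => abs_mul _ _)
  · exact (le_abs_self _).trans (abs_mul _ _).le

theorem sq_eq_two_mul_integral_Iic_mul_of_hasDerivAt {f f' : ℝ → ℝ} {a : ℝ}
    (hderiv : ∀ t ∈ Iic a, HasDerivAt f (f' t) t) (hf2 : IntegrableOn (fun t => f t ^ 2) (Iic a))
    (hff' : IntegrableOn (fun t => f t * f' t) (Iic a)) :
    f a ^ 2 = 2 * ∫ t in Iic a, f t * f' t := by
  have hderiv2 : ∀ t ∈ Iic a, HasDerivAt (fun s => f s ^ 2) (2 * (f t * f' t)) t := fun t ht => by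
    simpa [mul_comm, mul_left_comm, mul_assoc] using (hderiv t ht).fun_pow 2
  have hint : IntegrableOn (fun t => 2 * (f t * f' t)) (Iic a) := hff'.const_mul 2
  rw [← integral_const_mul, integral_Iic_of_hasDerivAt_of_tendsto' hderiv2 hint
    (tendsto_zero_of_hasDerivAt_of_integrableOn_Iic hderiv2 hint hf2), sub_zero]

theorem abs_le_sqrt_two_mul_rpow_mul_rpow {a A B : ℝ} (hA : 0 ≤ A) (hB : 0 ≤ B)
    (h : a ^ 2 ≤ 2 * √A * √B) : |a| ≤ √2 * A ^ ((1:ℝ)/4) * B ^ ((1:ℝ)/4) := by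
  have hquarter : ∀ {C : ℝ}, 0 ≤ C → C ^ ((1:ℝ)/4) = √(√C) := fun hC => by
    rw [Real.sqrt_eq_rpow, Real.sqrt_eq_rpow, ← Real.rpow_mul hC]; norm_num
  rw [hquarter hA, hquarter hB, ← Real.sqrt_mul (by norm_num), ← Real.sqrt_mul (by positivity),
    ← Real.sqrt_sq_eq_abs]
  exact Real.sqrt_le_sqrt h

/-- Agmon-type interpolation inequality on the half-line `(-∞, x]`:
`|z(x)| ≤ √2 ‖z‖_{L²((-∞,x])}^{1/2} ‖z'‖_{L²((-∞,x])}^{1/2}`. -/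
theorem agmon_halfline (z : ℝ → ℝ) (x : ℝ)
    (hz : ContDiff ℝ 1 z)
    (hz2 : IntegrableOn (fun t => z t ^ 2) (Iic x))
    (hz'2 : IntegrableOn (fun t => deriv z t ^ 2) (Iic x)) :
    |z x| ≤ Real.sqrt 2 * (∫ t in Iic x, z t ^ 2) ^ ((1:ℝ)/4) *
      (∫ t in Iic x, deriv z t ^ 2) ^ ((1:ℝ)/4) := by
  have hzL2 : MemLp z 2 (volume.restrict (Iic x)) :=
    (memLp_two_iff_integrable_sq hz.continuous.aestronglyMeasurable).2 hz2
  have hz'L2 : MemLp (deriv z) 2 (volume.restrict (Iic x)) :=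
    (memLp_two_iff_integrable_sq (measurable_deriv z).aestronglyMeasurable).2 hz'2
  have hsq : z x ^ 2 = 2 * ∫ t in Iic x, z t * deriv z t :=
    sq_eq_two_mul_integral_Iic_mul_of_hasDerivAt
      (fun t _ => (hz.differentiable one_ne_zero t).hasDerivAt) hz2 (hzL2.integrable_mul hz'L2)
  refine abs_le_sqrt_two_mul_rpow_mul_rpow (integral_nonneg fun t => sq_nonneg _)
    (integral_nonneg fun t => sq_nonneg _) ?_
  rw [hsq, mul_assoc]
  gcongr
  exact integral_mul_le_sqrt_integral_sq_mul_sqrt_integral_sq hzL2 hz'L2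
end

section
/- Let u₂ : ℝ → ℝ be integrable with u₂ > 0 a.e., let b₁, b₂ ∈ ℝ, and suppose ∫_{−∞}^{b₁} u₁(x) dx = ∫_{−∞}^{b₂} u₂(x) dx for an integrable u₁. Then ‖(𝟙_{(-∞,b₁]} − 𝟙_{(-∞,b₂]}) u₂‖_{L¹(ℝ)} = −sign(b₁ − b₂) · ∫_{−∞}^{b₁} (u₁(x) − u₂(x)) dx ≤ ‖𝟙_{(-∞,b₁]}(u₁ − u₂)‖_{L¹(ℝ)}. -/
/-!
If `u₂ ≥ 0`, the two truncations of `u₂` at the barriers differ by `±u₂` on the interval between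
the barriers, so the L¹ distance is the mass of `u₂` between them, with a sign fixed by their
order. Equal masses turn `∫_{Iic b₂} u₂ - ∫_{Iic b₁} u₂` into `∫_{Iic b₁} (u₁ - u₂)`, and the
inequality is then `|∫ g| ≤ ∫ |g|`.
-/

open MeasureTheory Set

theorem Real.sign_mul_le_abs (r x : ℝ) : Real.sign r * x ≤ |x| := by
  rcases Real.sign_apply_eq r with h | h | h <;> simp [h, neg_le_abs, le_abs_self]

theorem integral_abs_indicator_sub_indicator_of_subset {α : Type*} [MeasurableSpace α]
    {μ : Measure α} {f : α → ℝ} {s t : Set α} (hst : s ⊆ t) (ht : MeasurableSet t)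
    (hs : MeasurableSet s) (hf : ∀ᵐ x ∂μ, 0 ≤ f x) (hfi : IntegrableOn f t μ) :
    ∫ x, |s.indicator f x - t.indicator f x| ∂μ = ∫ x in t, f x ∂μ - ∫ x in s, f x ∂μ := by
  have hdiff : ∀ x, |s.indicator f x - t.indicator f x| = |(t \ s).indicator f x| := fun x => by
    rw [abs_sub_comm, indicator_sdiff hst, Pi.sub_apply]
  have habs : (fun x => |(t \ s).indicator f x|) =ᵐ[μ] (t \ s).indicator f :=
    hf.mono fun x hx => abs_of_nonneg (indicator_apply_nonneg fun _ => hx)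
  calc ∫ x, |s.indicator f x - t.indicator f x| ∂μ
      = ∫ x, (t \ s).indicator f x ∂μ := by simp_rw [hdiff]; exact integral_congr_ae habs
    _ = ∫ x in t \ s, f x ∂μ := integral_indicator (ht.diff hs)
    _ = ∫ x in t, f x ∂μ - ∫ x in s, f x ∂μ := setIntegral_sdiff hs hfi hst

theorem integral_abs_indicator_Iic_sub_indicator_Iic {μ : Measure ℝ} {f : ℝ → ℝ}
    (hf : ∀ᵐ x ∂μ, 0 ≤ f x) (hfi : Integrable f μ) (a b : ℝ) :
    ∫ x, |(Iic a).indicator f x - (Iic b).indicator f x| ∂μ =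
      Real.sign (b - a) * ((∫ x in Iic b, f x ∂μ) - ∫ x in Iic a, f x ∂μ) := by
  rcases lt_trichotomy a b with hab | rfl | hab
  · rw [Real.sign_of_pos (sub_pos.2 hab), one_mul]
    exact integral_abs_indicator_sub_indicator_of_subset (Iic_subset_Iic.2 hab.le)
      measurableSet_Iic measurableSet_Iic hf hfi.integrableOn
  · simp
  · simp_rw [abs_sub_comm ((Iic a).indicator f _)]
    rw [Real.sign_of_neg (sub_neg.2 hab), integral_abs_indicator_sub_indicator_of_subset
      (Iic_subset_Iic.2 hab.le) measurableSet_Iic measurableSet_Iic hf hfi.integrableOn]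
    ring

/-- Key identity for uniqueness: if `∫_{−∞}^{b₁} u₁ = ∫_{−∞}^{b₂} u₂` with
`u₂ > 0` a.e., then
`‖(𝟙_{(-∞,b₁]} − 𝟙_{(-∞,b₂]}) u₂‖_{L¹} = −sign(b₁−b₂) ∫_{−∞}^{b₁} (u₁ − u₂)`
and this is bounded by `‖𝟙_{(-∞,b₁]}(u₁ − u₂)‖_{L¹}`. -/
theorem barrier_difference_identity
    (u₁ u₂ : ℝ → ℝ) (b₁ b₂ : ℝ)
    (hu₁int : Integrable u₁) (hu₂int : Integrable u₂)
    (hu₂pos : ∀ᵐ x ∂(volume : Measure ℝ), 0 < u₂ x)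
    (hmass : (∫ x in Iic b₁, u₁ x) = ∫ x in Iic b₂, u₂ x) :
    (∫ x, |indicator (Iic b₁) u₂ x - indicator (Iic b₂) u₂ x|) =
        -(Real.sign (b₁ - b₂)) * ∫ x in Iic b₁, (u₁ x - u₂ x) ∧
    (∫ x, |indicator (Iic b₁) u₂ x - indicator (Iic b₂) u₂ x|) ≤
        ∫ x in Iic b₁, |u₁ x - u₂ x| := by
  have hdefect : ∫ x in Iic b₁, (u₁ x - u₂ x) = (∫ x in Iic b₂, u₂ x) - ∫ x in Iic b₁, u₂ x := by
    rw [integral_sub hu₁int.integrableOn hu₂int.integrableOn, hmass]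
  have hbarrier := integral_abs_indicator_Iic_sub_indicator_Iic
    (hu₂pos.mono fun _ hx => hx.le) hu₂int b₁ b₂
  rw [← hdefect] at hbarrier
  rw [← Real.sign_neg, neg_sub]
  refine ⟨hbarrier, ?_⟩
  calc _ = Real.sign (b₂ - b₁) * ∫ x in Iic b₁, (u₁ x - u₂ x) := hbarrier
    _ ≤ |∫ x in Iic b₁, (u₁ x - u₂ x)| := Real.sign_mul_le_abs _ _
    _ ≤ ∫ x in Iic b₁, |u₁ x - u₂ x| := abs_integral_le_integral_abs
end
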